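/- Let M→N be a matroid perspective on a finite linearly ordered ground set E. Let B ⊆ E be spanning in N and independent in M, let P ⊆ Int_N(B), let Q ⊆ Ext_M(B), and set A = (B∖P) ∪ Q. Then r_N(A) = r(N) − |P|. -/

import Mathlib

/-- A circuit of a matroid: a minimal dependent set. -/
def Matroid.IsCircuit' {α : Type*} (M : Matroid α) (C : Set α) : Prop :=
  M.Dep C ∧ ∀ D, M.Dep D → D ⊆ C → D = C

/-- A cocircuit of a matroid: a circuit of the dual matroid. -/
def Matroid.IsCocircuit' {α : Type*} (M : Matroid α) (C : Set α) : Prop :=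
  M✶.IsCircuit' C

/-- The rank of a set in a matroid: the largest cardinality of an independent subset. -/
noncomputable def Matroid.rk' {α : Type*} (M : Matroid α) (A : Set α) : ℕ :=
  sSup {n : ℕ | ∃ I, I ⊆ A ∧ M.Indep I ∧ I.ncard = n}

/-- `e` is the minimum element of the set `C`. -/
def IsMinOf {α : Type*} [LinearOrder α] (C : Set α) (e : α) : Prop :=
  e ∈ C ∧ ∀ x ∈ C, e ≤ x

/-- `Int_M(A)`: internally active elements of `A` w.r.t. `M`
(the ground set is the whole type, so `E ∖ A = Aᶜ`). -/
def IntSet {α : Type*} [LinearOrder α] (M : Matroid α) (A : Set α) : Set α :=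
  {e | e ∈ A ∧ ∃ C, M.IsCocircuit' C ∧ C ⊆ Aᶜ ∪ {e} ∧ IsMinOf C e}

/-- `Ext_M(A)`: externally active elements w.r.t. `M`. -/
def ExtSet {α : Type*} [LinearOrder α] (M : Matroid α) (A : Set α) : Set α :=
  {e | e ∉ A ∧ ∃ C, M.IsCircuit' C ∧ C ⊆ A ∪ {e} ∧ IsMinOf C e}

/-- `P_M(A)`: smallest elements of cocircuits of `M` contained in `E ∖ A`. -/
def PActSet {α : Type*} [LinearOrder α] (M : Matroid α) (A : Set α) : Set α :=
  {e | e ∉ A ∧ ∃ C, M.IsCocircuit' C ∧ C ⊆ Aᶜ ∧ IsMinOf C e}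

/-- `Q_M(A)`: smallest elements of circuits of `M` contained in `A`. -/
def QActSet {α : Type*} [LinearOrder α] (M : Matroid α) (A : Set α) : Set α :=
  {e | e ∈ A ∧ ∃ C, M.IsCircuit' C ∧ C ⊆ A ∧ IsMinOf C e}

/-! Every `p ∈ P` is the least element of an `N`-cocircuit meeting `B` only in `p`, so `p` is not
in the `N`-closure of `B \ {p}`, and deleting `P` from `B` lowers the `N`-rank by exactly `|P|`.
Every `q ∈ Q` closes an `M`-circuit `C ⊆ B ∪ {q}` with least element `q`. No element of `C \ {q}`
lies in `P`: its cocircuit would meet `C` in that element alone, which a perspective forbids.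
Hence `q ∈ cl_M (B \ P) ⊆ cl_N (B \ P)`, as `N`-flats are `M`-flats, and adding `Q` keeps the rank.
-/

open Set

namespace Matroid

variable {α : Type*} {M N : Matroid α} {B C K P X Y : Set α} {e : α}

lemma isCircuit'_iff : M.IsCircuit' C ↔ M.IsCircuit C := by
  rw [isCircuit_iff, IsCircuit']

lemma isCocircuit'_iff : M.IsCocircuit' K ↔ M.IsCocircuit K :=
  isCircuit'_iff

lemma rk'_eq_toNat_eRk (M : Matroid α) (X : Set α) : M.rk' X = (M.eRk X).toNat := by
  have hset : {n : ℕ | ∃ I, I ⊆ X ∧ M.Indep I ∧ I.ncard = n} = {n : ℕ | (n : ℕ∞) ≤ M.eRk X} := by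
    ext n
    simp only [Set.mem_ofPred_eq, le_eRk_iff]
    constructor
    · rintro ⟨I, hIX, hI, rfl⟩
      obtain hfin | hinf := I.finite_or_infinite
      · exact ⟨I, hIX, hI, hfin.cast_ncard_eq.symm⟩
      · exact ⟨∅, empty_subset X, M.empty_indep, by simp [hinf.ncard]⟩
    · rintro ⟨I, hIX, hI, hIn⟩
      exact ⟨I, hIX, hI, by rw [Set.ncard_def, hIn, ENat.toNat_natCast]⟩
  rw [rk', hset]
  cases M.eRk X with
  | top => simp
  | coe k => simp only [ENat.toNat_natCast, Nat.cast_le]; exact csSup_Iic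

lemma rk'_union_of_subset_closure (h : Y ⊆ M.closure X) : M.rk' (X ∪ Y) = M.rk' X := by
  have heRk : M.eRk (X ∪ Y) = M.eRk X := by
    refine le_antisymm ?_ (M.eRk_mono subset_union_left)
    calc M.eRk (X ∪ Y) ≤ M.eRk (X ∪ M.closure X) := M.eRk_mono (union_subset_union_right X h)
      _ = M.eRk X := by rw [eRk_union_closure_right_eq, union_self]
  rw [rk'_eq_toNat_eRk, rk'_eq_toNat_eRk, heRk]

lemma Spanning.rk'_eq (hX : M.Spanning X) : M.rk' X = M.rk' univ := by
  rw [rk'_eq_toNat_eRk, rk'_eq_toNat_eRk, hX.eRk_eq, eRk_univ_eq]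

lemma IsCocircuit.notMem_closure_of_disjoint (hK : M.IsCocircuit K) (he : e ∈ K)
    (hXK : Disjoint X K) : e ∉ M.closure X := by
  intro hcl
  obtain ⟨C, hCX, hC, heC⟩ := exists_isCircuit_of_mem_closure hcl (hXK.notMem_of_mem_right he)
  refine hC.inter_isCocircuit_ne_singleton hK (e := e) (subset_antisymm ?_ (by simp [heC, he]))
  rintro x ⟨hxC, hxK⟩
  obtain rfl | hxX := hCX hxC
  · rfl
  · exact absurd hxK (hXK.notMem_of_mem_left hxX)

lemma eRk_sdiff_add_encard (hP : P.Finite) (hPB : P ⊆ B)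
    (hPcl : ∀ p ∈ P, p ∈ M.E \ M.closure (B \ {p})) : M.eRk (B \ P) + P.encard = M.eRk B := by
  induction P, hP using Set.Finite.induction_on with
  | empty => simp
  | @insert a S haS hS ih =>
    have haB : a ∈ B := hPB (mem_insert a S)
    have hinsert : insert a (B \ insert a S) = B \ S := by
      rw [insert_eq a S, union_comm, ← sdiff_sdiff, insert_sdiff_singleton,
        insert_eq_of_mem (show a ∈ B \ S from ⟨haB, haS⟩)]
    have ha : a ∈ M.E \ M.closure (B \ insert a S) :=
      ⟨(hPcl a (mem_insert a S)).1, fun h ↦ (hPcl a (mem_insert a S)).2 <|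
        M.closure_subset_closure (sdiff_subset_sdiff_right (by simp)) h⟩
    rw [encard_insert_of_notMem haS, ← add_assoc, add_right_comm, ← eRk_insert_eq_add_one ha,
      hinsert, ih ((subset_insert a S).trans hPB) fun p hp ↦ hPcl p (mem_insert_of_mem a hp)]

lemma rk'_sdiff_add_ncard [M.RankFinite] (hP : P.Finite) (hPB : P ⊆ B)
    (hPcl : ∀ p ∈ P, p ∈ M.E \ M.closure (B \ {p})) : M.rk' (B \ P) + P.ncard = M.rk' B := by
  have h := eRk_sdiff_add_encard hP hPB hPcl
  rw [← hP.cast_ncard_eq] at h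
  rw [rk'_eq_toNat_eRk, rk'_eq_toNat_eRk, ← h, ENat.toNat_add (M.isRkFinite_set _).eRk_lt_top.ne
    (ENat.natCast_ne_top _), ENat.toNat_natCast]

lemma closure_subset_closure_of_forall_isFlat (hE : M.E = N.E)
    (hMN : ∀ F, N.IsFlat F → M.IsFlat F) (X : Set α) : M.closure X ⊆ N.closure X :=
  calc M.closure X = M.closure (X ∩ M.E) := (M.closure_inter_ground X).symm
    _ ⊆ M.closure (N.closure X) := M.closure_subset_closure (hE ▸ N.inter_ground_subset_closure X)
    _ = N.closure X := (hMN _ (N.isFlat_closure X)).closure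

lemma IsCircuit.inter_isCocircuit_ne_singleton_of_forall_isFlat (hE : M.E = N.E)
    (hMN : ∀ F, N.IsFlat F → M.IsFlat F) (hC : M.IsCircuit C) (hK : N.IsCocircuit K) :
    C ∩ K ≠ {e} := by
  intro hCK
  have heCK : e ∈ C ∩ K := hCK ▸ mem_singleton e
  refine hK.notMem_closure_of_disjoint heCK.2 (X := C \ {e}) ?_ <|
    closure_subset_closure_of_forall_isFlat hE hMN _ (hC.mem_closure_sdiff_singleton_of_mem heCK.1)
  exact Set.disjoint_left.2 fun x hx hxK ↦ hx.2 (hCK.subset ⟨hx.1, hxK⟩)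

section Activity

variable [LinearOrder α]

lemma notMem_closure_sdiff_singleton_of_mem_intSet (he : e ∈ IntSet N B) :
    e ∉ N.closure (B \ {e}) := by
  obtain ⟨-, D, hD, hDB, heD⟩ := he
  refine (isCocircuit'_iff.1 hD).notMem_closure_of_disjoint heD.1 (Set.disjoint_left.2 ?_)
  rintro x ⟨hxB, hxe⟩ hxD
  obtain hx | hx := hDB hxD
  · exact hx hxB
  · exact hxe hx

lemma extSet_subset_closure_sdiff_intSet (hE : M.E = N.E) (hMN : ∀ F, N.IsFlat F → M.IsFlat F) :
    ExtSet M B ⊆ N.closure (B \ IntSet N B) := by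
  rintro q ⟨hqB, C, hC, hCB, hqC⟩
  rw [isCircuit'_iff] at hC
  have hCq : C \ {q} ⊆ B \ IntSet N B := by
    rintro x ⟨hxC, hxq : x ≠ q⟩
    have hxB : x ∈ B := (hCB hxC).resolve_right hxq
    refine ⟨hxB, fun ⟨_, D, hD, hDB, hxD⟩ ↦ hC.inter_isCocircuit_ne_singleton_of_forall_isFlat hE
      hMN (isCocircuit'_iff.1 hD) (subset_antisymm ?_ (singleton_subset_iff.2 ⟨hxC, hxD.1⟩))⟩
    -- `q` is the least element of `C` and `x` the least of `D`, so `q ∉ D`.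
    rintro y ⟨hyC, hyD⟩
    obtain hyB | rfl := hDB hyD
    · obtain rfl : y = q := (hCB hyC).resolve_left hyB
      exact absurd (le_antisymm (hqC.2 x hxC) (hxD.2 y hyD)).symm hxq
    · rfl
  exact N.closure_subset_closure hCq <|
    closure_subset_closure_of_forall_isFlat hE hMN _ (hC.mem_closure_sdiff_singleton_of_mem hqC.1)

end Activity

end Matroid

theorem stmt7_general {α : Type*} [Fintype α] [LinearOrder α] (M N : Matroid α)
    (hME : M.E = Set.univ) (hNE : N.E = Set.univ)
    (hMN : ∀ F, N.IsFlat F → M.IsFlat F)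
    (B : Set α) (hBs : N.Spanning B)
    (P : Set α) (hP : P ⊆ IntSet N B) (Q : Set α) (hQ : Q ⊆ ExtSet M B) :
    N.rk' ((B \ P) ∪ Q) = N.rk' Set.univ - P.ncard := by
  have hQcl : Q ⊆ N.closure (B \ P) :=
    hQ.trans <| (Matroid.extSet_subset_closure_sdiff_intSet (hME.trans hNE.symm) hMN).trans <|
      N.closure_subset_closure (sdiff_subset_sdiff_right hP)
  have hPcl : ∀ p ∈ P, p ∈ N.E \ N.closure (B \ {p}) := fun p hp ↦
    ⟨hNE ▸ mem_univ p, Matroid.notMem_closure_sdiff_singleton_of_mem_intSet (hP hp)⟩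
  rw [Matroid.rk'_union_of_subset_closure hQcl, ← hBs.rk'_eq,
    ← Matroid.rk'_sdiff_add_ncard P.toFinite (fun p hp ↦ (hP hp).1) hPcl, Nat.add_sub_cancel]

/-- For a matroid perspective `M → N`, `B` spanning in `N` and independent in `M`,
`P ⊆ Int_N(B)`, `Q ⊆ Ext_M(B)`, and `A = (B ∖ P) ∪ Q`, we have `r_N(A) = r(N) − |P|`. -/
theorem stmt7 {α : Type*} [Fintype α] [LinearOrder α] (M N : Matroid α)
    (hME : M.E = Set.univ) (hNE : N.E = Set.univ)
    (hMN : ∀ F, N.IsFlat F → M.IsFlat F)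
    (B : Set α) (hBs : N.Spanning B) (hBi : M.Indep B)
    (P : Set α) (hP : P ⊆ IntSet N B) (Q : Set α) (hQ : Q ⊆ ExtSet M B) :
    N.rk' ((B \ P) ∪ Q) = N.rk' Set.univ - P.ncard :=
  stmt7_general M N hME hNE hMN B hBs P hP Q hQ
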